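/- arXiv:2108.05999 — 2 statements merged into one kernel-verified Lean document; each statement's English description precedes it below -/
import Mathlib

section
/- Let M be a 2×2 real matrix with 0 < det M < (1/4)·trace(M)². Then M has two distinct real eigenvalues λ₁, λ₂ with |λ₁| > |λ₂| > 0, and the induced angle map G on K = [0,π) has exactly two fixed points. At the fixed point θ^s corresponding to the eigendirection of λ₁, dG/dθ(θ^s) = λ₂/λ₁ ∈ (0,1); at the fixed point θ^u corresponding to the eigendirection of λ₂, dG/dθ(θ^u) = λ₁/λ₂ > 1. -/
open Real

private lemma eq_of_sin_sub_zero {x y : ℝ} (hx : x ∈ Set.Ico 0 π) (hy : y ∈ Set.Ico 0 π)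
    (h : Real.sin (x - y) = 0) : x = y := by
  rcases Real.sin_eq_zero_iff.mp h with ⟨k, hk⟩
  have hp := Real.pi_pos
  have h1 : -π < (k:ℝ) * π := by rw [hk]; linarith [hx.1, hx.2, hy.1, hy.2]
  have h2 : (k:ℝ) * π < π := by rw [hk]; linarith [hx.1, hx.2, hy.1, hy.2]
  have hk1 : (-1:ℝ) < k := by nlinarith
  have hk2 : (k:ℝ) < 1 := by nlinarith
  have hk1' : (-1:ℤ) < k := by exact_mod_cast hk1
  have hk2' : k < (1:ℤ) := by exact_mod_cast hk2
  have : k = 0 := by omega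
  rw [this] at hk; push_cast at hk; linarith

private lemma arctan_tan_shift {Δ : ℝ} (h1 : -π < Δ) (h2 : Δ < π) (hc : Real.cos Δ ≠ 0) :
    ∃ k : ℤ, Real.arctan (Real.tan Δ) = Δ + k * π := by
  have hp := Real.pi_pos
  rcases lt_trichotomy Δ (-(π/2)) with h | h | h
  · refine ⟨1, ?_⟩
    rw [show Real.tan Δ = Real.tan (Δ + π) by rw [Real.tan_add_pi],
      Real.arctan_tan (by linarith) (by linarith)]
    push_cast; ring
  · exact absurd (by rw [h, Real.cos_neg, Real.cos_pi_div_two]) hc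
  rcases lt_trichotomy Δ (π/2) with h' | h' | h'
  · exact ⟨0, by rw [Real.arctan_tan (by linarith) h']; push_cast; ring⟩
  · exact absurd (by rw [h', Real.cos_pi_div_two]) hc
  · refine ⟨-1, ?_⟩
    rw [show Real.tan Δ = Real.tan (Δ - π) by rw [Real.tan_sub_pi],
      Real.arctan_tan (by linarith) (by linarith)]
    push_cast; ring

private lemma exists_angle (x y : ℝ) (h : ¬(x = 0 ∧ y = 0)) :
    ∃ θ ∈ Set.Ico 0 π, ∃ r : ℝ, r ≠ 0 ∧ x = r * Real.cos θ ∧ y = r * Real.sin θ := by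
  have hp := Real.pi_pos
  by_cases hx : x = 0
  · have hy : y ≠ 0 := fun hy => h ⟨hx, hy⟩
    exact ⟨π/2, ⟨by linarith, by linarith⟩, y, hy, by simp [hx], by simp⟩
  · set t := Real.arctan (y / x) with ht
    have hc : 0 < Real.cos t := Real.cos_arctan_pos _
    have htan : Real.tan t = y / x := Real.tan_arctan _
    have hsin : x * Real.sin t = y * Real.cos t := by
      rw [Real.tan_eq_sin_div_cos] at htan
      field_simp at htan; linarith
    have hb1 : -(π/2) < t := Real.neg_pi_div_two_lt_arctan _
    have hb2 : t < π/2 := Real.arctan_lt_pi_div_two _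
    rcases le_or_gt 0 t with h0 | h0
    · refine ⟨t, ⟨h0, by linarith⟩, x / Real.cos t, div_ne_zero hx hc.ne', ?_, ?_⟩
      · field_simp
      · field_simp; linarith [hsin]
    · refine ⟨t + π, ⟨by linarith, by linarith⟩, -(x / Real.cos t), by
        simpa using div_ne_zero hx hc.ne', ?_, ?_⟩
      · rw [Real.cos_add_pi]; field_simp
      · rw [Real.sin_add_pi]; field_simp; linarith [hsin]

private lemma lift_deriv (M : Matrix (Fin 2) (Fin 2) ℝ) (G : ℝ → ℝ)
    (hG : ∀ θ : ℝ, G θ ∈ Set.Ico 0 Real.pi ∧ ∃ α : ℝ, α ≠ 0 ∧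
      M.mulVec ![Real.cos θ, Real.sin θ] = α • ![Real.cos (G θ), Real.sin (G θ)])
    (θ₀ lam mu : ℝ) (hθ₀ : θ₀ ∈ Set.Ico 0 Real.pi) (hlam : lam ≠ 0)
    (htr : M 0 0 + M 1 1 = lam + mu)
    (heig : M.mulVec ![Real.cos θ₀, Real.sin θ₀] = lam • ![Real.cos θ₀, Real.sin θ₀]) :
    ∃ L : ℝ → ℝ, HasDerivAt L (mu / lam) θ₀ ∧ ∀ s : ℝ, ∃ k : ℤ, L s = G s + k * Real.pi := by
  have hp := Real.pi_pos
  set a := M 0 0; set b := M 0 1; set c := M 1 0; set d := M 1 1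
  set C := Real.cos θ₀ with hC
  set S := Real.sin θ₀ with hS
  have eq0 : a * C + b * S = lam * C := by
    have := congrFun heig 0
    simpa [Matrix.mulVec, dotProduct, Fin.sum_univ_two] using this
  have eq1 : c * C + d * S = lam * S := by
    have := congrFun heig 1
    simpa [Matrix.mulVec, dotProduct, Fin.sum_univ_two] using this
  have pyth : C ^ 2 + S ^ 2 = 1 := by
    rw [hC, hS]; exact Real.cos_sq_add_sin_sq θ₀
  set f : ℝ → ℝ := fun s => C * (a * Real.cos s + b * Real.sin s) + S * (c * Real.cos s + d * Real.sin s) with hf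
  set g : ℝ → ℝ := fun s => -S * (a * Real.cos s + b * Real.sin s) + C * (c * Real.cos s + d * Real.sin s) with hgdef
  have hf0 : f θ₀ = lam := by
    simp only [hf, ← hC, ← hS]
    linear_combination C*eq0 + S*eq1 + lam*pyth
  have hg0 : g θ₀ = 0 := by
    simp only [hgdef, ← hC, ← hS]
    linear_combination (-S)*eq0 + C*eq1
  -- derivatives
  have hfd : HasDerivAt f (C * (a * (-Real.sin θ₀) + b * Real.cos θ₀) + S * (c * (-Real.sin θ₀) + d * Real.cos θ₀)) θ₀ := by
    apply HasDerivAt.add <;>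
    · apply HasDerivAt.const_mul
      exact ((Real.hasDerivAt_cos θ₀).const_mul _).add ((Real.hasDerivAt_sin θ₀).const_mul _)
  have hgd : HasDerivAt g (-S * (a * (-Real.sin θ₀) + b * Real.cos θ₀) + C * (c * (-Real.sin θ₀) + d * Real.cos θ₀)) θ₀ := by
    apply HasDerivAt.add <;>
    · apply HasDerivAt.const_mul
      exact ((Real.hasDerivAt_cos θ₀).const_mul _).add ((Real.hasDerivAt_sin θ₀).const_mul _)
  have hgd0 : -S * (a * (-S) + b * C) + C * (c * (-S) + d * C) = mu := by
    linear_combination (-C)*eq0 + (-S)*eq1 + (a+d-lam)*pyth + htr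
  have hu : HasDerivAt (fun s => g s / f s) (mu / lam) θ₀ := by
    have := hgd.div hfd (by rw [hf0]; exact hlam)
    rw [hg0, hf0, ← hC, ← hS, hgd0] at this
    convert this using 1
    · rfl
    · rfl
    · rfl
    field_simp
    ring
  have huval : g θ₀ / f θ₀ = 0 := by rw [hg0]; simp
  have hA : HasDerivAt (fun s => θ₀ + Real.arctan (g s / f s)) (mu / lam) θ₀ := by
    have harc : HasDerivAt Real.arctan (1 / (1 + (g θ₀ / f θ₀) ^ 2)) (g θ₀ / f θ₀) :=
      Real.hasDerivAt_arctan _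
    have := (harc.comp θ₀ hu).const_add θ₀
    rw [huval] at this
    simpa using this
  set L : ℝ → ℝ := fun s => if f s = 0 then G s else θ₀ + Real.arctan (g s / f s) with hL
  have hfcont : Continuous f := by fun_prop
  have hev : ∀ᶠ s in nhds θ₀, f s ≠ 0 :=
    hfcont.continuousAt.eventually_ne (by rw [hf0]; exact hlam)
  refine ⟨L, ?_, ?_⟩
  · apply hA.congr_of_eventuallyEq
    filter_upwards [hev] with s hs
    simp [hL, hs]
  · intro s
    by_cases hfs : f s = 0
    · exact ⟨0, by simp [hL, hfs]⟩
    · obtain ⟨⟨hG1, hG2⟩, α, hα, hEq⟩ := hG s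
      have e0 : a * Real.cos s + b * Real.sin s = α * Real.cos (G s) := by
        have := congrFun hEq 0
        simpa [Matrix.mulVec, dotProduct, Fin.sum_univ_two] using this
      have e1 : c * Real.cos s + d * Real.sin s = α * Real.sin (G s) := by
        have := congrFun hEq 1
        simpa [Matrix.mulVec, dotProduct, Fin.sum_univ_two] using this
      have hfs' : f s = α * Real.cos (G s - θ₀) := by
        rw [Real.cos_sub, hf]; simp only [e0, e1, ← hC, ← hS]; ring
      have hgs' : g s = α * Real.sin (G s - θ₀) := by
        rw [Real.sin_sub, hgdef]; simp only [e0, e1, ← hC, ← hS]; ring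
      have hcosne : Real.cos (G s - θ₀) ≠ 0 := by
        intro hc0; apply hfs; rw [hfs', hc0, mul_zero]
      have hquot : g s / f s = Real.tan (G s - θ₀) := by
        rw [hfs', hgs', Real.tan_eq_sin_div_cos, mul_div_mul_left _ _ hα]
      obtain ⟨k, hk⟩ := arctan_tan_shift (Δ := G s - θ₀)
        (by linarith [hG1, hG2, hθ₀.1, hθ₀.2]) (by linarith [hG1, hG2, hθ₀.1, hθ₀.2]) hcosne
      refine ⟨k, ?_⟩
      rw [hL]; simp only [if_neg hfs]
      rw [hquot, hk]; ring

set_option maxHeartbeats 2000000 in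
/-- If `0 < det M < trace(M)²/4` then `M` has two distinct real eigenvalues
`λ₁, λ₂` with `|λ₁| > |λ₂| > 0`, the induced angle map `G` on `K = [0,π)` has
exactly two fixed points `θˢ` (the `λ₁`-eigendirection) and `θᵘ` (the
`λ₂`-eigendirection), with `dG/dθ(θˢ) = λ₂/λ₁ ∈ (0,1)` and
`dG/dθ(θᵘ) = λ₁/λ₂ > 1` (derivatives taken of a lift of `G`). -/
theorem angle_map_two_fixed_points (M : Matrix (Fin 2) (Fin 2) ℝ)
    (hdet : 0 < M.det) (htr : M.det < M.trace ^ 2 / 4)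
    (G : ℝ → ℝ)
    (hG : ∀ θ : ℝ, G θ ∈ Set.Ico 0 Real.pi ∧ ∃ α : ℝ, α ≠ 0 ∧
      M.mulVec ![Real.cos θ, Real.sin θ] = α • ![Real.cos (G θ), Real.sin (G θ)]) :
    ∃ lam1 lam2 θs θu : ℝ,
      lam1 + lam2 = M.trace ∧ lam1 * lam2 = M.det ∧
      |lam2| < |lam1| ∧ 0 < |lam2| ∧
      θs ∈ Set.Ico 0 Real.pi ∧ θu ∈ Set.Ico 0 Real.pi ∧ θs ≠ θu ∧
      M.mulVec ![Real.cos θs, Real.sin θs] = lam1 • ![Real.cos θs, Real.sin θs] ∧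
      M.mulVec ![Real.cos θu, Real.sin θu] = lam2 • ![Real.cos θu, Real.sin θu] ∧
      G θs = θs ∧ G θu = θu ∧
      (∀ θ ∈ Set.Ico 0 Real.pi, G θ = θ → θ = θs ∨ θ = θu) ∧
      lam2 / lam1 ∈ Set.Ioo (0 : ℝ) 1 ∧ 1 < lam1 / lam2 ∧
      (∃ L : ℝ → ℝ, HasDerivAt L (lam2 / lam1) θs ∧
        ∀ s : ℝ, ∃ k : ℤ, L s = G s + k * Real.pi) ∧
      (∃ L : ℝ → ℝ, HasDerivAt L (lam1 / lam2) θu ∧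
        ∀ s : ℝ, ∃ k : ℤ, L s = G s + k * Real.pi) := by
  have hp := Real.pi_pos
  set a := M 0 0 with ha
  set b := M 0 1 with hb
  set c := M 1 0 with hc
  set d := M 1 1 with hd
  have htrace : M.trace = a + d := Matrix.trace_fin_two M
  have hdet2 : M.det = a * d - b * c := Matrix.det_fin_two M
  set q := Real.sqrt (M.trace ^ 2 - 4 * M.det) with hqdef
  have hq2 : q ^ 2 = M.trace ^ 2 - 4 * M.det := Real.sq_sqrt (by linarith)
  have hqpos : 0 < q := Real.sqrt_pos.mpr (by linarith)
  have ht0 : M.trace ≠ 0 := by intro h; rw [h] at htr; norm_num at htr; linarith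
  set e : ℝ := if 0 ≤ M.trace then 1 else -1 with he
  have he2 : e ^ 2 = 1 := by rw [he]; split <;> norm_num
  have he0 : e ≠ 0 := by intro h; rw [h] at he2; norm_num at he2
  have het : e * M.trace = |M.trace| := by
    rw [he]; split
    · rw [abs_of_nonneg (by assumption)]; ring
    · rw [abs_of_neg (by linarith [lt_of_not_ge (by assumption)])]; ring
  set lam1 := (M.trace + e * q) / 2 with hlam1
  set lam2 := (M.trace - e * q) / 2 with hlam2
  have hsum : lam1 + lam2 = M.trace := by rw [hlam1, hlam2]; ring
  have hprod : lam1 * lam2 = M.det := by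
    rw [hlam1, hlam2]
    linear_combination (-(q^2)/4) * he2 - (1/4) * hq2
  have hDpos : 0 < lam1 * lam2 := by rw [hprod]; exact hdet
  have hlam1ne : lam1 ≠ 0 := by intro h; rw [h] at hDpos; simp at hDpos
  have hlam2ne : lam2 ≠ 0 := by intro h; rw [h] at hDpos; simp at hDpos
  have habs2 : 0 < |lam2| := abs_pos.mpr hlam2ne
  have htabs : 0 < |M.trace| := abs_pos.mpr ht0
  have hsqdiff : lam1 ^ 2 - lam2 ^ 2 = |M.trace| * q := by
    rw [hlam1, hlam2, ← het]; ring
  have habs : |lam2| < |lam1| := by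
    have h2 : |lam2| ^ 2 < |lam1| ^ 2 := by
      rw [sq_abs, sq_abs]; linarith [hsqdiff, mul_pos htabs hqpos]
    exact lt_of_pow_lt_pow_left₀ 2 (abs_nonneg lam1) h2
  have hne : lam1 ≠ lam2 := by
    intro h
    have : e * q = 0 := by rw [hlam1, hlam2] at h; linarith
    rcases mul_eq_zero.mp this with h' | h'
    · exact he0 h'
    · exact hqpos.ne' h'
  clear_value lam2 lam1 e q
  -- roots of characteristic polynomial
  have hroot1 : lam1 ^ 2 - M.trace * lam1 + M.det = 0 := by
    linear_combination lam1 * hsum - hprod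
  have hroot2 : lam2 ^ 2 - M.trace * lam2 + M.det = 0 := by
    linear_combination lam2 * hsum - hprod
  -- component extraction
  have comp : ∀ (θ lam : ℝ), M.mulVec ![Real.cos θ, Real.sin θ] = lam • ![Real.cos θ, Real.sin θ] →
      a * Real.cos θ + b * Real.sin θ = lam * Real.cos θ ∧
      c * Real.cos θ + d * Real.sin θ = lam * Real.sin θ := by
    intro θ lam h
    constructor
    · have := congrFun h 0
      simpa [Matrix.mulVec, dotProduct, Fin.sum_univ_two] using this
    · have := congrFun h 1
      simpa [Matrix.mulVec, dotProduct, Fin.sum_univ_two] using this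
  have mkeq : ∀ (θ lam : ℝ),
      a * Real.cos θ + b * Real.sin θ = lam * Real.cos θ →
      c * Real.cos θ + d * Real.sin θ = lam * Real.sin θ →
      M.mulVec ![Real.cos θ, Real.sin θ] = lam • ![Real.cos θ, Real.sin θ] := by
    intro θ lam h0 h1
    funext i
    fin_cases i <;>
      simp [Matrix.mulVec, dotProduct, Fin.sum_univ_two] <;> [exact h0; exact h1]
  -- eigenvector existence
  have eigvec : ∀ lam : ℝ, lam ^ 2 - M.trace * lam + M.det = 0 →
      ∃ θ ∈ Set.Ico 0 π, M.mulVec ![Real.cos θ, Real.sin θ] = lam • ![Real.cos θ, Real.sin θ] := by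
    intro lam hch
    have hdetN : (a - lam) * (d - lam) - b * c = 0 := by
      rw [htrace, hdet2] at hch; linear_combination hch
    by_cases h1 : a - lam = 0 ∧ b = 0
    · by_cases h2 : d - lam = 0 ∧ c = 0
      · exfalso
        obtain ⟨h1a, h1b⟩ := h1; obtain ⟨h2a, h2b⟩ := h2
        have hta : M.trace = 2 * lam := by rw [htrace]; linarith
        have hda : M.det = lam * lam := by
          rw [hdet2]; linear_combination d * h1a + lam * h2a - c * h1b
        have hq0 : q ^ 2 = 0 := by rw [hq2, hta, hda]; ring
        exact (pow_pos hqpos 2).ne' hq0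
      · have hv : ¬((d - lam) = 0 ∧ (-c) = 0) := by
          intro ⟨u1, u2⟩; exact h2 ⟨u1, by linarith⟩
        obtain ⟨θ, hθ, r, hr, hx, hy⟩ := exists_angle (d - lam) (-c) hv
        refine ⟨θ, hθ, mkeq θ lam ?_ ?_⟩
        · have key : r * (a * Real.cos θ + b * Real.sin θ - lam * Real.cos θ) = 0 := by
            linear_combination (-(a - lam)) * hx - b * hy + hdetN
          rcases mul_eq_zero.mp key with h' | h'
          · exact absurd h' hr
          · linarith
        · have key : r * (c * Real.cos θ + d * Real.sin θ - lam * Real.sin θ) = 0 := by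
            linear_combination (-c) * hx - (d - lam) * hy
          rcases mul_eq_zero.mp key with h' | h'
          · exact absurd h' hr
          · linarith
    · have hv : ¬(b = 0 ∧ (lam - a) = 0) := by
        intro ⟨u1, u2⟩; exact h1 ⟨by linarith, u1⟩
      obtain ⟨θ, hθ, r, hr, hx, hy⟩ := exists_angle b (lam - a) hv
      refine ⟨θ, hθ, mkeq θ lam ?_ ?_⟩
      · have key : r * (a * Real.cos θ + b * Real.sin θ - lam * Real.cos θ) = 0 := by
          linear_combination (-(a - lam)) * hx - b * hy
        rcases mul_eq_zero.mp key with h' | h'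
        · exact absurd h' hr
        · linarith
      · have key : r * (c * Real.cos θ + d * Real.sin θ - lam * Real.sin θ) = 0 := by
          linear_combination (-c) * hx - (d - lam) * hy - hdetN
        rcases mul_eq_zero.mp key with h' | h'
        · exact absurd h' hr
        · linarith
  obtain ⟨θs, hθs, heigs⟩ := eigvec lam1 hroot1
  obtain ⟨θu, hθu, heigu⟩ := eigvec lam2 hroot2
  -- same eigenvalue implies same angle
  have same_eig : ∀ (lam θ1 θ2 : ℝ), θ1 ∈ Set.Ico 0 π → θ2 ∈ Set.Ico 0 π →
      M.mulVec ![Real.cos θ1, Real.sin θ1] = lam • ![Real.cos θ1, Real.sin θ1] →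
      M.mulVec ![Real.cos θ2, Real.sin θ2] = lam • ![Real.cos θ2, Real.sin θ2] →
      θ1 = θ2 := by
    intro lam θ1 θ2 hθ1 hθ2 hE1 hE2
    obtain ⟨p0, p1⟩ := comp θ1 lam hE1
    obtain ⟨q0, q1⟩ := comp θ2 lam hE2
    apply eq_of_sin_sub_zero hθ1 hθ2
    by_contra hcr
    have hcr' : Real.sin θ1 * Real.cos θ2 - Real.cos θ1 * Real.sin θ2 ≠ 0 := by
      rw [Real.sin_sub] at hcr; exact hcr
    set X := Real.sin θ1 * Real.cos θ2 - Real.cos θ1 * Real.sin θ2 with hX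
    have hrow : ∀ p q' : ℝ, p * Real.cos θ1 + q' * Real.sin θ1 = 0 →
        p * Real.cos θ2 + q' * Real.sin θ2 = 0 → p = 0 ∧ q' = 0 := by
      intro p q' e1 e2
      have hp : p * X = 0 := by linear_combination (-Real.sin θ2) * e1 + Real.sin θ1 * e2
      have hq : q' * X = 0 := by linear_combination Real.cos θ2 * e1 - Real.cos θ1 * e2
      constructor
      · rcases mul_eq_zero.mp hp with h | h
        · exact h
        · exact absurd h hcr'
      · rcases mul_eq_zero.mp hq with h | h
        · exact h
        · exact absurd h hcr'
    obtain ⟨ra, rb⟩ := hrow (a - lam) b (by linarith) (by linarith)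
    obtain ⟨rc, rd⟩ := hrow c (d - lam) (by linarith) (by linarith)
    have hta : M.trace = 2 * lam := by rw [htrace]; linarith
    have hda : M.det = lam * lam := by
      rw [hdet2]; linear_combination d * ra + lam * rd - c * rb
    have hq0 : q ^ 2 = 0 := by rw [hq2, hta, hda]; ring
    exact (pow_pos hqpos 2).ne' hq0
  -- θs ≠ θu
  have hsu : θs ≠ θu := by
    intro h
    obtain ⟨p0, p1⟩ := comp θs lam1 heigs
    obtain ⟨q0, q1⟩ := comp θu lam2 heigu
    rw [h] at p0 p1
    have pyth : Real.cos θu ^ 2 + Real.sin θu ^ 2 = 1 := Real.cos_sq_add_sin_sq θu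
    have : lam1 = lam2 := by
      linear_combination (-Real.cos θu) * p0 + Real.cos θu * q0 -
        Real.sin θu * p1 + Real.sin θu * q1 - (lam1 - lam2) * pyth
    exact hne this
  -- fixed points
  have fixed : ∀ (θ lam : ℝ),
      M.mulVec ![Real.cos θ, Real.sin θ] = lam • ![Real.cos θ, Real.sin θ] →
      lam ≠ 0 → θ ∈ Set.Ico 0 π → G θ = θ := by
    intro θ lam hE hlamne hθ
    obtain ⟨hGmem, α, hα, hEq⟩ := hG θ
    obtain ⟨p0, p1⟩ := comp θ lam hE
    have e0 : a * Real.cos θ + b * Real.sin θ = α * Real.cos (G θ) := by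
      have := congrFun hEq 0
      simpa [Matrix.mulVec, dotProduct, Fin.sum_univ_two] using this
    have e1 : c * Real.cos θ + d * Real.sin θ = α * Real.sin (G θ) := by
      have := congrFun hEq 1
      simpa [Matrix.mulVec, dotProduct, Fin.sum_univ_two] using this
    have key : α * (Real.sin (G θ) * Real.cos θ - Real.cos (G θ) * Real.sin θ) = 0 := by
      linear_combination (-Real.cos θ) * e1 + Real.sin θ * e0 - Real.sin θ * p0 + Real.cos θ * p1
    apply eq_of_sin_sub_zero hGmem hθ
    rw [Real.sin_sub]
    rcases mul_eq_zero.mp key with h | h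
    · exact absurd h hα
    · exact h
  have hGs : G θs = θs := fixed θs lam1 heigs hlam1ne hθs
  have hGu : G θu = θu := fixed θu lam2 heigu hlam2ne hθu
  -- uniqueness
  have uniq : ∀ θ ∈ Set.Ico 0 Real.pi, G θ = θ → θ = θs ∨ θ = θu := by
    intro θ hθ hfix
    obtain ⟨hGmem, α, hα, hEq⟩ := hG θ
    rw [hfix] at hEq
    obtain ⟨e0, e1⟩ := comp θ α hEq
    have pyth : Real.cos θ ^ 2 + Real.sin θ ^ 2 = 1 := Real.cos_sq_add_sin_sq θ
    have hdetα : (a - α) * (d - α) - b * c = 0 := by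
      linear_combination ((d - α) * Real.cos θ - c * Real.sin θ) * e0 +
        ((a - α) * Real.sin θ - b * Real.cos θ) * e1 +
        (-((a - α) * (d - α) - b * c)) * pyth
    have hsum' := hsum; have hprod' := hprod
    rw [htrace] at hsum'; rw [hdet2] at hprod'
    have hchar : (α - lam1) * (α - lam2) = 0 := by
      linear_combination hdetα - α * hsum' + hprod'
    rcases mul_eq_zero.mp hchar with h | h
    · left
      have hαl : α = lam1 := by linarith [sub_eq_zero.mp h]
      rw [hαl] at hEq
      exact same_eig lam1 θ θs hθ hθs hEq heigs
    · right
      have hαl : α = lam2 := by linarith [sub_eq_zero.mp h]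
      rw [hαl] at hEq
      exact same_eig lam2 θ θu hθ hθu hEq heigu
  -- ratio facts
  have habs1 : 0 < |lam1| := lt_trans habs2 habs
  have hr1 : lam2 / lam1 ∈ Set.Ioo (0 : ℝ) 1 := by
    constructor
    · have : lam2 / lam1 = (lam1 * lam2) / lam1 ^ 2 := by field_simp
      rw [this]
      apply div_pos hDpos
      have : lam1 ^ 2 = |lam1| ^ 2 := (sq_abs lam1).symm
      rw [this]; positivity
    · calc lam2 / lam1 ≤ |lam2 / lam1| := le_abs_self _
        _ = |lam2| / |lam1| := abs_div _ _
        _ < 1 := (div_lt_one habs1).mpr habs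
  have hr2 : 1 < lam1 / lam2 := by
    have hpos : 0 < lam1 / lam2 := by
      have : lam1 / lam2 = (lam1 * lam2) / lam2 ^ 2 := by field_simp
      rw [this]
      apply div_pos hDpos
      have : lam2 ^ 2 = |lam2| ^ 2 := (sq_abs lam2).symm
      rw [this]; positivity
    have : |lam1 / lam2| = lam1 / lam2 := abs_of_pos hpos
    calc (1:ℝ) < |lam1| / |lam2| := (one_lt_div habs2).mpr habs
      _ = |lam1 / lam2| := (abs_div _ _).symm
      _ = lam1 / lam2 := this
  -- lifts
  have hL1 := lift_deriv M G hG θs lam1 lam2 hθs hlam1ne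
    (by rw [← ha, ← hd]; rw [htrace] at hsum; linarith) heigs
  have hL2 := lift_deriv M G hG θu lam2 lam1 hθu hlam2ne
    (by rw [← ha, ← hd]; rw [htrace] at hsum; linarith) heigu
  exact ⟨lam1, lam2, θs, θu, hsum, hprod, habs, habs2, hθs, hθu, hsu, heigs, heigu,
    hGs, hGu, uniq, hr1, hr2, hL1, hL2⟩
end

section
/- Let f be the 2D border-collision normal form with τ_L > 0, δ_L, δ_R > 0, μ = 1, and suppose Z = (x,y) with x < 0, y ≤ 0 has the property that some forward iterate f^n(Z), n ≥ 1, lies in Φ = {(x,y) : x < 0, y ≤ 0}. Then there exist integers p, q ≥ 1 such that F(Z) := f^n(Z) (with n minimal such that f^n(Z) ∈ Φ) equals f_R^q(f_L^p(Z)), where f_L(Z) = A_L Z + (1,0)ᵀ and f_R(Z) = A_R Z + (1,0)ᵀ; moreover p is the smallest i ≥ 1 with f^i(Z) having positive first coordinate (or lying just past the left half-plane), and f^j(Z) has nonnegative first coordinate for p ≤ j < p + q with p + q = n. -/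
/-- Structure of the induced map (Lemma 2.1): if `Z ∈ Φ = {x < 0, y ≤ 0}` returns
to `Φ` under iteration of the border-collision normal form `f`, and `n ≥ 1` is the
minimal return time, then `f^n(Z) = f_R^q (f_L^p Z)` where `p ≥ 1` is the smallest
index at which the orbit leaves the left half-plane (first coordinate becomes
positive), the orbit stays in the right half-plane for `p ≤ j < p + q`, and
`p + q = n`. -/
theorem induced_map_structure (τL τR δL δR : ℝ) (hτL : 0 < τL) (hδL : 0 < δL) (hδR : 0 < δR)
    (f fL fR : ℝ × ℝ → ℝ × ℝ)
    (hf : ∀ x y : ℝ, f (x, y) =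
      if x ≤ 0 then (τL * x + y + 1, -δL * x) else (τR * x + y + 1, -δR * x))
    (hfL : ∀ x y : ℝ, fL (x, y) = (τL * x + y + 1, -δL * x))
    (hfR : ∀ x y : ℝ, fR (x, y) = (τR * x + y + 1, -δR * x))
    (Φ : Set (ℝ × ℝ)) (hΦ : Φ = {p : ℝ × ℝ | p.1 < 0 ∧ p.2 ≤ 0})
    (Z : ℝ × ℝ) (hZ : Z ∈ Φ)
    (n : ℕ) (hn1 : 1 ≤ n) (hret : f^[n] Z ∈ Φ)
    (hmin : ∀ m : ℕ, 1 ≤ m → m < n → f^[m] Z ∉ Φ) :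
    ∃ p q : ℕ, 1 ≤ p ∧ 1 ≤ q ∧ p + q = n ∧
      f^[n] Z = fR^[q] (fL^[p] Z) ∧
      f^[p] Z = fL^[p] Z ∧
      0 < (f^[p] Z).1 ∧
      (∀ i : ℕ, i < p → (f^[i] Z).1 ≤ 0) ∧
      (∀ j : ℕ, p ≤ j → j < p + q → 0 ≤ (f^[j] Z).1) := by
  subst hΦ
  obtain ⟨hZx, hZy⟩ := hZ
  -- pointwise forms
  have hf' : ∀ W : ℝ × ℝ, f W =
      if W.1 ≤ 0 then (τL * W.1 + W.2 + 1, -δL * W.1)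
      else (τR * W.1 + W.2 + 1, -δR * W.1) := by
    intro W
    have := hf W.1 W.2
    simpa using this
  have hfL' : ∀ W : ℝ × ℝ, fL W = (τL * W.1 + W.2 + 1, -δL * W.1) := by
    intro W; have := hfL W.1 W.2; simpa using this
  have hfR' : ∀ W : ℝ × ℝ, fR W = (τR * W.1 + W.2 + 1, -δR * W.1) := by
    intro W; have := hfR W.1 W.2; simpa using this
  -- f agrees with fL on the left half-plane and with fR on the right half-plane
  have hfeqL : ∀ W : ℝ × ℝ, W.1 ≤ 0 → f W = fL W := by
    intro W hW; rw [hf', hfL', if_pos hW]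
  have hfeqR : ∀ W : ℝ × ℝ, 0 ≤ W.1 → f W = fR W := by
    intro W hW
    rcases eq_or_lt_of_le hW with h | h
    · rw [hf', hfR', if_pos (le_of_eq h.symm), ← h]
      norm_num
    · rw [hf', hfR', if_neg (not_le.2 h)]
  -- sign lemmas for the second coordinate
  have hy1 : ∀ i : ℕ, 0 ≤ (f^[i] Z).1 → (f^[i + 1] Z).2 ≤ 0 := by
    intro i hi
    rw [Function.iterate_succ_apply', hf']
    split_ifs <;> simp <;> nlinarith
  have hy2 : ∀ i : ℕ, (f^[i] Z).1 < 0 → 0 < (f^[i + 1] Z).2 := by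
    intro i hi
    rw [Function.iterate_succ_apply', hf', if_pos hi.le]
    simp
    nlinarith
  have hxprev : ∀ i : ℕ, (f^[i + 1] Z).2 ≤ 0 → 0 ≤ (f^[i] Z).1 := by
    intro i hi
    by_contra h
    push_neg at h
    exact absurd hi (not_le.2 (hy2 i h))
  -- n ≥ 2
  have hn2 : 2 ≤ n := by
    by_contra h
    have hn : n = 1 := by omega
    subst hn
    have := hxprev 0 hret.2
    simp at this
    linarith
  obtain ⟨m, rfl⟩ : ∃ m, n = m + 2 := ⟨n - 2, by omega⟩
  -- existence of a first exit time
  have hex : ∃ j : ℕ, 1 ≤ j ∧ j < m + 2 ∧ 0 < (f^[j] Z).1 := by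
    by_contra h
    push_neg at h
    have hall : ∀ j : ℕ, j < m + 2 → (f^[j] Z).1 ≤ 0 := by
      intro j hj
      rcases Nat.eq_zero_or_pos j with rfl | hj1
      · simpa using hZx.le
      · exact h j hj1 hj
    have h1 : 0 ≤ (f^[m + 1] Z).1 := hxprev (m + 1) hret.2
    have h2 : (f^[m + 1] Z).1 = 0 := le_antisymm (hall (m + 1) (by omega)) h1
    -- compute x_{m+2}
    have h3 : (f^[m + 2] Z).1 = (f^[m + 1] Z).2 + 1 := by
      rw [show m + 2 = (m + 1) + 1 by rfl, Function.iterate_succ_apply', hf',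
        if_pos (le_of_eq h2), h2]
      norm_num
    have h4 : 0 ≤ (f^[m + 1] Z).2 := by
      rw [Function.iterate_succ_apply', hf', if_pos (hall m (by omega))]
      simp
      nlinarith [hall m (by omega)]
    have h5 : (f^[m + 2] Z).1 < 0 := hret.1
    linarith
  classical
  set p := Nat.find hex with hpdef
  obtain ⟨hp1, hpn, hppos⟩ : 1 ≤ p ∧ p < m + 2 ∧ 0 < (f^[p] Z).1 := Nat.find_spec hex
  -- before p the orbit is in the left half-plane
  have hleft : ∀ i : ℕ, i < p → (f^[i] Z).1 ≤ 0 := by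
    intro i hi
    rcases Nat.eq_zero_or_pos i with rfl | hi1
    · simpa using hZx.le
    · have := Nat.find_min hex hi
      by_contra hc
      push_neg at hc
      exact this ⟨hi1, by omega, hc⟩
  -- from p to n the orbit is in the right half-plane
  have hright : ∀ j : ℕ, p ≤ j → j < m + 2 → 0 ≤ (f^[j] Z).1 := by
    intro j hpj
    induction j, hpj using Nat.le_induction with
    | base => intro _; exact hppos.le
    | succ j hj IH =>
      intro hlt
      have hxj : 0 ≤ (f^[j] Z).1 := IH (by omega)
      have hyj : (f^[j + 1] Z).2 ≤ 0 := hy1 j hxj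
      have hnot := hmin (j + 1) (by omega) hlt
      by_contra hc
      push_neg at hc
      exact hnot ⟨hc, hyj⟩
  -- left phase: f agrees with fL
  have hLphase : ∀ i : ℕ, i ≤ p → f^[i] Z = fL^[i] Z := by
    intro i
    induction i with
    | zero => intro _; rfl
    | succ i IH =>
      intro hi
      rw [Function.iterate_succ_apply', Function.iterate_succ_apply',
        ← IH (by omega), hfeqL _ (hleft i (by omega))]
  -- right phase: f agrees with fR
  have hRphase : ∀ k : ℕ, p + k ≤ m + 2 → f^[p + k] Z = fR^[k] (f^[p] Z) := by
    intro k
    induction k with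
    | zero => intro _; rfl
    | succ k IH =>
      intro hk
      rw [show p + (k + 1) = (p + k) + 1 by ring, Function.iterate_succ_apply',
        Function.iterate_succ_apply', ← IH (by omega),
        hfeqR _ (hright (p + k) (by omega) (by omega))]
  refine ⟨p, m + 2 - p, hp1, by omega, by omega, ?_, hLphase p le_rfl, hppos,
    hleft, ?_⟩
  · have := hRphase (m + 2 - p) (by omega)
    rw [show p + (m + 2 - p) = m + 2 by omega] at this
    rw [this, hLphase p le_rfl]
  · intro j hpj hj
    exact hright j hpj (by omega)
end
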